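/- arXiv:1301.4900 — 5 statements merged into one kernel-verified Lean document; each statement's English description precedes it below -/
import Mathlib

section
/- Let X and Y be complex Hilbert spaces, T : X → X a bounded operator with ‖T^k‖ ≤ c₀ for all k ≥ 0, C : X → Y a bounded operator, and α > -1 a real number. Suppose there is a constant M ≥ 0 such that ∑_{k=0}^∞ (k+1)^α ‖C T^k x‖² ≤ M² ‖x‖² for all x ∈ X (α-admissibility). Let β > -1 be such that m = (α+β)/2 is a nonnegative integer. Then there exists a constant K ≥ 0 such that (1 - |ω|²)^{(1+β)/2} ‖C (I - ωT)^{-(m+1)}‖ ≤ K for all ω in the open unit disc. -/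
/-!
Since `T` is power bounded, `(1 - ωT)^{-(m+1)} = ∑ₖ C(k+m, m) ωᵏ Tᵏ` for `|ω| < 1`, and
Cauchy–Schwarz against the weights `(k+1)^α` of the admissibility condition gives
`‖C (1 - ωT)^{-(m+1)}‖ ≤ M (∑ₖ C(k+m, m)² (k+1)^{-α} |ω|^{2k})^{1/2}`.
As `C(k+m, m) ≤ (k+1)^m` and `2m - α = β`, the last sum is at most `∑ₖ (k+1)^β sᵏ` with
`s = |ω|²`, which is `O((1-s)^{-(1+β)})` when `β > -1`: for integer `β` this is the binomial
series, for `β ≥ 0` one interpolates between `⌊β⌋` and `⌊β⌋ + 1` with a tangent line of the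
concave function `t ↦ t^{β - ⌊β⌋}`, and for `-1 < β < 0` summation by parts against the
concavity of `t ↦ t^{β+1}` reduces to the exponent `β + 1`.
-/

open Real Nat

section GeometricSums

variable {s : ℝ}

theorem add_one_pow_le_factorial_mul_choose (k n : ℕ) :
    ((k : ℝ) + 1) ^ n ≤ n ! * (k + n).choose n := by
  have h := Nat.pow_sub_le_descFactorial (k + n) n
  rw [show k + n + 1 - n = k + 1 by omega, Nat.descFactorial_eq_factorial_mul_choose] at h
  exact_mod_cast h

theorem summable_add_one_pow_mul_geometric (n : ℕ) (hs0 : 0 ≤ s) (hs1 : s < 1) :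
    Summable fun k : ℕ => ((k : ℝ) + 1) ^ n * s ^ k := by
  have hs : ‖s‖ < 1 := by rwa [Real.norm_of_nonneg hs0]
  refine ((summable_choose_mul_geometric_of_norm_lt_one n hs).mul_left (n ! : ℝ)).of_nonneg_of_le
    (fun k => by positivity) fun k => ?_
  rw [← mul_assoc]
  gcongr
  exact add_one_pow_le_factorial_mul_choose k n

theorem summable_add_one_rpow_mul_geometric (β : ℝ) (hs0 : 0 ≤ s) (hs1 : s < 1) :
    Summable fun k : ℕ => ((k : ℝ) + 1) ^ β * s ^ k := by
  refine (summable_add_one_pow_mul_geometric ⌈β⌉₊ hs0 hs1).of_nonneg_of_le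
    (fun k => by positivity) fun k => ?_
  have h := rpow_le_rpow_of_exponent_le (by linarith [k.cast_nonneg (α := ℝ)] : (1 : ℝ) ≤ k + 1)
    (Nat.le_ceil β)
  rw [rpow_natCast] at h
  exact mul_le_mul_of_nonneg_right h (by positivity)

theorem one_sub_pow_mul_tsum_add_one_pow_mul_geometric_le (n : ℕ) (hs0 : 0 ≤ s) (hs1 : s < 1) :
    (1 - s) ^ (n + 1) * ∑' k : ℕ, ((k : ℝ) + 1) ^ n * s ^ k ≤ n ! := by
  have hs : ‖s‖ < 1 := by rwa [Real.norm_of_nonneg hs0]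
  have hchoose := summable_choose_mul_geometric_of_norm_lt_one n hs
  have hpos : 0 < (1 - s) ^ (n + 1) := pow_pos (by linarith) _
  calc (1 - s) ^ (n + 1) * ∑' k : ℕ, ((k : ℝ) + 1) ^ n * s ^ k
      ≤ (1 - s) ^ (n + 1) * ∑' k : ℕ, (n ! : ℝ) * ((k + n).choose n * s ^ k) := by
        refine mul_le_mul_of_nonneg_left
          ((summable_add_one_pow_mul_geometric n hs0 hs1).tsum_le_tsum (fun k => ?_)
            (hchoose.mul_left _)) hpos.le
        rw [← mul_assoc]
        gcongr
        exact add_one_pow_le_factorial_mul_choose k n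
    _ = n ! := by
        rw [tsum_mul_left, tsum_choose_mul_geometric_of_norm_lt_one n hs]
        field_simp

theorem rpow_le_one_sub_add_mul {a γ : ℝ} (ha : 0 ≤ a) (hγ0 : 0 ≤ γ) (hγ1 : γ ≤ 1) :
    a ^ γ ≤ 1 - γ + γ * a := by
  have h := rpow_one_add_le_one_add_mul_self (s := a - 1) (by linarith) hγ0 hγ1
  rw [add_sub_cancel] at h
  linarith

/-- The tangent line of `t ↦ t ^ (β - n)` at `t = 1`, evaluated at `t = (1 - s) (k + 1)`,
reduces the estimate to the integer exponents `n` and `n + 1`. -/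
theorem one_sub_rpow_mul_tsum_add_one_rpow_mul_geometric_le {n : ℕ} {β : ℝ} (hn : n ≤ β)
    (hβ : β ≤ n + 1) (hs0 : 0 ≤ s) (hs1 : s < 1) :
    (1 - s) ^ (1 + β) * ∑' k : ℕ, ((k : ℝ) + 1) ^ β * s ^ k ≤ (n + 1)! := by
  set t := 1 - s
  have ht : 0 < t := by linarith
  set γ := β - n
  have hβγ : β = n + γ := by ring
  have hterm : ∀ k : ℕ, t ^ (1 + β) * (((k : ℝ) + 1) ^ β * s ^ k) ≤
      γ * (t ^ (n + 1 + 1) * (((k : ℝ) + 1) ^ (n + 1) * s ^ k)) +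
        (1 - γ) * (t ^ (n + 1) * (((k : ℝ) + 1) ^ n * s ^ k)) := by
    intro k
    have hk : (0 : ℝ) < k + 1 := by positivity
    have hsplit : t ^ (1 + β) * (((k : ℝ) + 1) ^ β * s ^ k) =
        t ^ (n + 1) * (((k : ℝ) + 1) ^ n * s ^ k) * (t * (k + 1)) ^ γ := by
      rw [mul_rpow ht.le hk.le, hβγ, ← add_assoc, rpow_add ht, rpow_add hk,
        show (1 : ℝ) + n = (n + 1 : ℕ) by push_cast; ring, rpow_natCast, rpow_natCast]
      ring
    rw [hsplit]
    calc _ ≤ t ^ (n + 1) * (((k : ℝ) + 1) ^ n * s ^ k) * (1 - γ + γ * (t * (k + 1))) := by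
          gcongr
          exact rpow_le_one_sub_add_mul (by positivity) (by linarith) (by linarith)
      _ = _ := by ring
  have hsum := fun m : ℕ => summable_add_one_pow_mul_geometric m hs0 hs1
  have hfac : (n ! : ℝ) ≤ (n + 1)! := by exact_mod_cast Nat.factorial_le (by omega)
  calc t ^ (1 + β) * ∑' k : ℕ, ((k : ℝ) + 1) ^ β * s ^ k
      = ∑' k : ℕ, t ^ (1 + β) * (((k : ℝ) + 1) ^ β * s ^ k) := tsum_mul_left.symm
    _ ≤ ∑' k : ℕ, (γ * (t ^ (n + 1 + 1) * (((k : ℝ) + 1) ^ (n + 1) * s ^ k)) +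
          (1 - γ) * (t ^ (n + 1) * (((k : ℝ) + 1) ^ n * s ^ k))) :=
        ((summable_add_one_rpow_mul_geometric β hs0 hs1).mul_left _).tsum_le_tsum hterm
          ((((hsum (n + 1)).mul_left _).mul_left _).add (((hsum n).mul_left _).mul_left _))
    _ = γ * (t ^ (n + 1 + 1) * ∑' k : ℕ, ((k : ℝ) + 1) ^ (n + 1) * s ^ k) +
          (1 - γ) * (t ^ (n + 1) * ∑' k : ℕ, ((k : ℝ) + 1) ^ n * s ^ k) := by
        rw [(((hsum (n + 1)).mul_left _).mul_left _).tsum_add (((hsum n).mul_left _).mul_left _),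
          tsum_mul_left, tsum_mul_left, tsum_mul_left, tsum_mul_left]
    _ ≤ γ * (n + 1)! + (1 - γ) * n ! :=
        add_le_add
          (mul_le_mul_of_nonneg_left
            (one_sub_pow_mul_tsum_add_one_pow_mul_geometric_le (n + 1) hs0 hs1) (by linarith))
          (mul_le_mul_of_nonneg_left
            (one_sub_pow_mul_tsum_add_one_pow_mul_geometric_le n hs0 hs1) (by linarith))
    _ ≤ (n + 1)! := by nlinarith

theorem mul_add_one_rpow_sub_one_le_add_one_rpow_sub_rpow {γ x : ℝ} (hγ0 : 0 ≤ γ) (hγ1 : γ ≤ 1)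
    (hx : 0 ≤ x) : γ * (x + 1) ^ (γ - 1) ≤ (x + 1) ^ γ - x ^ γ := by
  have hx1 : 0 < x + 1 := by linarith
  have h := rpow_le_one_sub_add_mul (div_nonneg hx hx1.le) hγ0 hγ1
  rw [div_rpow hx hx1.le, div_le_iff₀ (rpow_pos_of_pos hx1 γ)] at h
  rw [rpow_sub_one hx1.ne']
  have : (1 - γ + γ * (x / (x + 1))) * (x + 1) ^ γ = (x + 1) ^ γ - γ * ((x + 1) ^ γ / (x + 1)) := by
    field_simp
    ring
  linarith

theorem mul_tsum_add_one_rpow_sub_one_mul_geometric_le {γ : ℝ} (hγ0 : 0 < γ) (hγ1 : γ ≤ 1)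
    (hs0 : 0 ≤ s) (hs1 : s < 1) :
    γ * ∑' k : ℕ, ((k : ℝ) + 1) ^ (γ - 1) * s ^ k ≤
      (1 - s) * ∑' k : ℕ, ((k : ℝ) + 1) ^ γ * s ^ k := by
  have hf := summable_add_one_rpow_mul_geometric γ hs0 hs1
  have hg : Summable fun k : ℕ => (k : ℝ) ^ γ * s ^ k :=
    hf.of_nonneg_of_le (fun k => by positivity) fun k => by gcongr; linarith
  have hshift : s * ∑' k : ℕ, ((k : ℝ) + 1) ^ γ * s ^ k = ∑' k : ℕ, (k : ℝ) ^ γ * s ^ k := by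
    rw [hg.tsum_eq_zero_add, ← tsum_mul_left]
    simp only [Nat.cast_zero, zero_rpow hγ0.ne', zero_mul, zero_add, Nat.cast_add, Nat.cast_one]
    exact tsum_congr fun k => by ring
  rw [sub_mul, one_mul, hshift, ← hf.tsum_sub hg, ← tsum_mul_left]
  refine ((summable_add_one_rpow_mul_geometric (γ - 1) hs0 hs1).mul_left γ).tsum_le_tsum
    (fun k => ?_) (hf.sub hg)
  rw [← mul_assoc, ← sub_mul]
  gcongr
  exact mul_add_one_rpow_sub_one_le_add_one_rpow_sub_rpow hγ0.le hγ1 k.cast_nonneg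

theorem one_sub_rpow_mul_tsum_add_one_rpow_mul_geometric_le_of_nonpos {β : ℝ} (hβ1 : -1 < β)
    (hβ0 : β ≤ 0) (hs0 : 0 ≤ s) (hs1 : s < 1) :
    (1 - s) ^ (1 + β) * ∑' k : ℕ, ((k : ℝ) + 1) ^ β * s ^ k ≤ 1 / (1 + β) := by
  have ht : 0 < 1 - s := by linarith
  have hγ : 0 < 1 + β := by linarith
  have hstep := mul_tsum_add_one_rpow_sub_one_mul_geometric_le hγ (by linarith) hs0 hs1
  have hbound := one_sub_rpow_mul_tsum_add_one_rpow_mul_geometric_le (n := 0) (β := 1 + β)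
    (by simpa using hγ.le) (by simpa using hβ0) hs0 hs1
  rw [add_sub_cancel_left] at hstep
  rw [le_div_iff₀ hγ]
  calc (1 - s) ^ (1 + β) * (∑' k : ℕ, ((k : ℝ) + 1) ^ β * s ^ k) * (1 + β)
      = (1 - s) ^ (1 + β) * ((1 + β) * ∑' k : ℕ, ((k : ℝ) + 1) ^ β * s ^ k) := by ring
    _ ≤ (1 - s) ^ (1 + β) * ((1 - s) * ∑' k : ℕ, ((k : ℝ) + 1) ^ (1 + β) * s ^ k) := by
        gcongr
    _ = (1 - s) ^ (1 + (1 + β)) * ∑' k : ℕ, ((k : ℝ) + 1) ^ (1 + β) * s ^ k := by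
        rw [rpow_add ht 1 (1 + β), rpow_one]
        ring
    _ ≤ 1 := by simpa using hbound

theorem exists_one_sub_rpow_mul_tsum_add_one_rpow_mul_geometric_le {β : ℝ} (hβ : -1 < β) :
    ∃ K, 0 ≤ K ∧ ∀ s : ℝ, 0 ≤ s → s < 1 →
      (1 - s) ^ (1 + β) * ∑' k : ℕ, ((k : ℝ) + 1) ^ β * s ^ k ≤ K := by
  rcases le_or_gt 0 β with hβ0 | hβ0
  · exact ⟨_, by positivity, fun s hs0 hs1 => one_sub_rpow_mul_tsum_add_one_rpow_mul_geometric_le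
      (Nat.floor_le hβ0) (Nat.lt_floor_add_one β).le hs0 hs1⟩
  · have hγ : 0 < 1 + β := by linarith
    exact ⟨_, by positivity, fun s hs0 hs1 =>
      one_sub_rpow_mul_tsum_add_one_rpow_mul_geometric_le_of_nonpos hβ hβ0.le hs0 hs1⟩

end GeometricSums

theorem hasSum_pow_inverse_one_sub {R : Type*} [Ring R] [TopologicalSpace R] [IsTopologicalRing R]
    [T2Space R] {x : R} (h : Summable (x ^ ·)) : HasSum (x ^ ·) (Ring.inverse (1 - x)) := by
  let u : Rˣ := ⟨1 - x, ∑' n, x ^ n, h.one_sub_mul_tsum_pow, h.tsum_pow_mul_one_sub⟩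
  rw [show 1 - x = (u : R) from rfl, Ring.inverse_unit]
  exact h.hasSum

section NeumannSeries

variable {R : Type*} [NormedRing R] {x : R} {c r : ℝ}

theorem summable_norm_choose_nsmul_pow (hr0 : 0 ≤ r) (hr1 : r < 1)
    (hx : ∀ n, ‖x ^ n‖ ≤ c * r ^ n) (k : ℕ) :
    Summable fun n : ℕ => ‖(n + k).choose k • x ^ n‖ := by
  have hr : ‖r‖ < 1 := by rwa [Real.norm_of_nonneg hr0]
  refine ((summable_choose_mul_geometric_of_norm_lt_one k hr).mul_left c).of_nonneg_of_le
    (fun _ => norm_nonneg _) fun n => ?_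
  calc ‖(n + k).choose k • x ^ n‖ ≤ (n + k).choose k * ‖x ^ n‖ := norm_nsmul_le
    _ ≤ (n + k).choose k * (c * r ^ n) := by gcongr; exact hx n
    _ = c * ((n + k).choose k * r ^ n) := by ring

theorem hasSum_choose_nsmul_pow_inverse_one_sub_pow [CompleteSpace R] (hr0 : 0 ≤ r) (hr1 : r < 1)
    (hx : ∀ n, ‖x ^ n‖ ≤ c * r ^ n) (k : ℕ) :
    HasSum (fun n : ℕ => (n + k).choose k • x ^ n) (Ring.inverse (1 - x) ^ (k + 1)) := by
  have hgeom_norm : Summable fun n : ℕ => ‖x ^ n‖ := by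
    simpa using summable_norm_choose_nsmul_pow hr0 hr1 hx 0
  have hgeom := hasSum_pow_inverse_one_sub hgeom_norm.of_norm
  induction k with
  | zero => simpa using hgeom
  | succ k ih =>
    convert hasSum_sum_range_mul_of_summable_norm
      (summable_norm_choose_nsmul_pow hr0 hr1 hx k) hgeom_norm using 1
    · ext n
      have hmul : ∀ i ∈ Finset.range (n + 1), (i + k).choose k • x ^ i * x ^ (n - i) =
          (i + k).choose k • x ^ n := fun i hi => by
        rw [smul_mul_assoc, ← pow_add, Nat.add_sub_cancel' (Finset.mem_range_succ_iff.mp hi)]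
      rw [Finset.sum_congr rfl hmul, ← Finset.sum_smul, Nat.sum_range_add_choose, add_assoc]
    · rw [ih.tsum_eq, hgeom.tsum_eq, pow_succ]

end NeumannSeries

theorem summable_mul_and_tsum_mul_le_sqrt_mul_sqrt {f g : ℕ → ℝ} (hf : ∀ i, 0 ≤ f i)
    (hg : ∀ i, 0 ≤ g i) (hf2 : Summable fun i => f i ^ 2) (hg2 : Summable fun i => g i ^ 2) :
    Summable (fun i => f i * g i) ∧ ∑' i, f i * g i ≤ √(∑' i, f i ^ 2) * √(∑' i, g i ^ 2) := by
  simp only [← rpow_two] at hf2 hg2 ⊢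
  simpa [sqrt_eq_rpow] using
    summable_and_inner_le_Lp_mul_Lq_tsum_of_nonneg .two_two hf hg hf2 hg2

theorem choose_sq_div_rpow_le (k m : ℕ) (α : ℝ) :
    ((k + m).choose m : ℝ) ^ 2 / ((k : ℝ) + 1) ^ α ≤ ((k : ℝ) + 1) ^ (2 * m - α) := by
  have hk : (0 : ℝ) < k + 1 := by positivity
  rw [rpow_sub hk, div_le_div_iff_of_pos_right (rpow_pos_of_pos hk α), mul_comm, rpow_mul hk.le,
    rpow_natCast, rpow_two]
  gcongr
  exact_mod_cast Nat.choose_add_le_add_one_pow k m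

theorem summable_choose_sq_div_rpow_mul_geometric (m : ℕ) (α : ℝ) {s : ℝ} (hs0 : 0 ≤ s)
    (hs1 : s < 1) :
    Summable fun k : ℕ => ((k + m).choose m : ℝ) ^ 2 / ((k : ℝ) + 1) ^ α * s ^ k :=
  (summable_add_one_rpow_mul_geometric (2 * m - α) hs0 hs1).of_nonneg_of_le
    (fun k => by positivity) fun k => by gcongr; exact choose_sq_div_rpow_le k m α

theorem norm_comp_inverse_one_sub_smul_pow_le {X Y : Type*}
    [NormedAddCommGroup X] [NormedSpace ℂ X] [CompleteSpace X]
    [NormedAddCommGroup Y] [NormedSpace ℂ Y]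
    {T : X →L[ℂ] X} {c₀ : ℝ} (hT : ∀ k : ℕ, ‖T ^ k‖ ≤ c₀) (C : X →L[ℂ] Y) {α M : ℝ} (hM : 0 ≤ M)
    (hsum : ∀ x : X, Summable (fun k : ℕ => ((k : ℝ) + 1) ^ α * ‖C (T ^ k <| x)‖ ^ 2))
    (hadm : ∀ x : X, (∑' k : ℕ, ((k : ℝ) + 1) ^ α * ‖C (T ^ k <| x)‖ ^ 2) ≤ M ^ 2 * ‖x‖ ^ 2)
    (m : ℕ) {ω : ℂ} (hω : ‖ω‖ < 1) :
    ‖C.comp (Ring.inverse (1 - ω • T) ^ (m + 1))‖ ≤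
      M * √(∑' k : ℕ, ((k + m).choose m : ℝ) ^ 2 / ((k : ℝ) + 1) ^ α * (‖ω‖ ^ 2) ^ k) := by
  have hpow : ∀ k : ℕ, ‖(ω • T) ^ k‖ ≤ c₀ * ‖ω‖ ^ k := fun k => by
    rw [smul_pow, norm_smul, norm_pow, mul_comm]
    gcongr
    exact hT k
  have hR := hasSum_choose_nsmul_pow_inverse_one_sub_pow (norm_nonneg ω) hω hpow m
  refine ContinuousLinearMap.opNorm_le_bound _ (by positivity) fun y => ?_
  have hRy : HasSum (fun k : ℕ => C (((k + m).choose m • (ω • T) ^ k) y))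
      (C.comp (Ring.inverse (1 - ω • T) ^ (m + 1)) y) :=
    (hR.mapL (ContinuousLinearMap.apply ℂ X y)).mapL C
  have hw : ∀ k : ℕ, 0 < ((k : ℝ) + 1) ^ α := fun k => by positivity
  set a : ℕ → ℝ := fun k => (k + m).choose m * ‖ω‖ ^ k / √(((k : ℝ) + 1) ^ α)
  set b : ℕ → ℝ := fun k => √(((k : ℝ) + 1) ^ α) * ‖C ((T ^ k) y)‖
  have hterm : ∀ k : ℕ, ‖C (((k + m).choose m • (ω • T) ^ k) y)‖ ≤ a k * b k := fun k => by
    calc ‖C (((k + m).choose m • (ω • T) ^ k) y)‖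
        ≤ (k + m).choose m * ‖ω ^ k • C ((T ^ k) y)‖ := by
          rw [smul_pow, smul_apply, map_nsmul, smul_apply, map_smul]
          exact norm_nsmul_le
      _ = a k * b k := by
          simp only [a, b, norm_smul, norm_pow]
          field_simp
  have ha2 : ∀ k : ℕ, a k ^ 2 = ((k + m).choose m : ℝ) ^ 2 / ((k : ℝ) + 1) ^ α * (‖ω‖ ^ 2) ^ k :=
    fun k => by
      simp only [a, div_pow, mul_pow, sq_sqrt (hw k).le]
      ring
  have hb2 : ∀ k : ℕ, b k ^ 2 = ((k : ℝ) + 1) ^ α * ‖C ((T ^ k) y)‖ ^ 2 := fun k => by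
    simp only [b, mul_pow, sq_sqrt (hw k).le]
  have hs1 : ‖ω‖ ^ 2 < 1 := pow_lt_one₀ (norm_nonneg ω) hω two_ne_zero
  obtain ⟨hab, hCS⟩ := summable_mul_and_tsum_mul_le_sqrt_mul_sqrt (f := a) (g := b)
    (fun k => by positivity) (fun k => by positivity)
    (by simpa only [ha2] using summable_choose_sq_div_rpow_mul_geometric m α (by positivity) hs1)
    (by simpa only [hb2] using hsum y)
  have hbM : √(∑' k, b k ^ 2) ≤ M * ‖y‖ := by
    rw [sqrt_le_left (by positivity)]
    simpa only [hb2, mul_pow] using hadm y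
  calc ‖C.comp (Ring.inverse (1 - ω • T) ^ (m + 1)) y‖ ≤ ∑' k, a k * b k :=
        hRy.norm_le_of_bounded hab.hasSum hterm
    _ ≤ √(∑' k, a k ^ 2) * √(∑' k, b k ^ 2) := hCS
    _ ≤ √(∑' k, a k ^ 2) * (M * ‖y‖) := by gcongr
    _ = _ := by simp only [ha2]; ring

theorem stmt4_general {X Y : Type*}
    [NormedAddCommGroup X] [InnerProductSpace ℂ X] [CompleteSpace X]
    [NormedAddCommGroup Y] [InnerProductSpace ℂ Y]
    (T : X →L[ℂ] X) (c₀ : ℝ) (hT : ∀ k : ℕ, ‖T ^ k‖ ≤ c₀)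
    (C : X →L[ℂ] Y) (α β : ℝ) (hβ : β > -1)
    (m : ℕ) (hm : (α + β) / 2 = (m : ℝ))
    (M : ℝ) (hM : 0 ≤ M)
    (hsum : ∀ x : X, Summable (fun k : ℕ => ((k : ℝ) + 1) ^ α * ‖C (T ^ k <| x)‖ ^ 2))
    (hadm : ∀ x : X, (∑' k : ℕ, ((k : ℝ) + 1) ^ α * ‖C (T ^ k <| x)‖ ^ 2) ≤ M ^ 2 * ‖x‖ ^ 2) :
    ∃ K : ℝ, 0 ≤ K ∧ ∀ ω : ℂ, ‖ω‖ < 1 →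
      (1 - ‖ω‖ ^ 2) ^ ((1 + β) / 2) * ‖C.comp ((Ring.inverse (1 - ω • T)) ^ (m + 1))‖ ≤ K := by
  obtain ⟨K, hK0, hK⟩ := exists_one_sub_rpow_mul_tsum_add_one_rpow_mul_geometric_le hβ
  refine ⟨M * √K, by positivity, fun ω hω => ?_⟩
  have hs0 : 0 ≤ ‖ω‖ ^ 2 := by positivity
  have hs1 : ‖ω‖ ^ 2 < 1 := pow_lt_one₀ (norm_nonneg ω) hω two_ne_zero
  have ht : 0 ≤ 1 - ‖ω‖ ^ 2 := by linarith
  have hβm : 2 * (m : ℝ) - α = β := by linarith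
  have hcoef : ∑' k : ℕ, ((k + m).choose m : ℝ) ^ 2 / ((k : ℝ) + 1) ^ α * (‖ω‖ ^ 2) ^ k ≤
      ∑' k : ℕ, ((k : ℝ) + 1) ^ β * (‖ω‖ ^ 2) ^ k :=
    (summable_choose_sq_div_rpow_mul_geometric m α hs0 hs1).tsum_le_tsum
      (fun k => by gcongr; exact hβm ▸ choose_sq_div_rpow_le k m α)
      (summable_add_one_rpow_mul_geometric β hs0 hs1)
  calc (1 - ‖ω‖ ^ 2) ^ ((1 + β) / 2) * ‖C.comp ((Ring.inverse (1 - ω • T)) ^ (m + 1))‖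
      ≤ (1 - ‖ω‖ ^ 2) ^ ((1 + β) / 2) *
          (M * √(∑' k : ℕ, ((k + m).choose m : ℝ) ^ 2 / ((k : ℝ) + 1) ^ α * (‖ω‖ ^ 2) ^ k)) := by
        gcongr
        exact norm_comp_inverse_one_sub_smul_pow_le hT C hM hsum hadm m hω
    _ = M * √((1 - ‖ω‖ ^ 2) ^ (1 + β) *
          ∑' k : ℕ, ((k + m).choose m : ℝ) ^ 2 / ((k : ℝ) + 1) ^ α * (‖ω‖ ^ 2) ^ k) := by
        rw [sqrt_mul (rpow_nonneg ht _), sqrt_eq_rpow ((1 - ‖ω‖ ^ 2) ^ (1 + β)), ← rpow_mul ht,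
          show (1 + β) * (1 / 2) = (1 + β) / 2 by ring]
        ring
    _ ≤ M * √((1 - ‖ω‖ ^ 2) ^ (1 + β) * ∑' k : ℕ, ((k : ℝ) + 1) ^ β * (‖ω‖ ^ 2) ^ k) := by
        gcongr
    _ ≤ M * √K := by
        gcongr
        exact hK _ hs0 hs1

/-- If C is α-admissible for the power bounded operator T on a Hilbert space, and
m = (α+β)/2 is a nonnegative integer, then there is K ≥ 0 with
(1-|ω|²)^((1+β)/2) ‖C (I - ωT)^{-(m+1)}‖ ≤ K for all ω in the open unit disc. -/
theorem stmt4 {X Y : Type*}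
    [NormedAddCommGroup X] [InnerProductSpace ℂ X] [CompleteSpace X]
    [NormedAddCommGroup Y] [InnerProductSpace ℂ Y] [CompleteSpace Y]
    (T : X →L[ℂ] X) (c₀ : ℝ) (hT : ∀ k : ℕ, ‖T ^ k‖ ≤ c₀)
    (C : X →L[ℂ] Y) (α β : ℝ) (hα : α > -1) (hβ : β > -1)
    (m : ℕ) (hm : (α + β) / 2 = (m : ℝ))
    (M : ℝ) (hM : 0 ≤ M)
    (hsum : ∀ x : X, Summable (fun k : ℕ => ((k : ℝ) + 1) ^ α * ‖C (T ^ k <| x)‖ ^ 2))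
    (hadm : ∀ x : X, (∑' k : ℕ, ((k : ℝ) + 1) ^ α * ‖C (T ^ k <| x)‖ ^ 2) ≤ M ^ 2 * ‖x‖ ^ 2) :
    ∃ K : ℝ, 0 ≤ K ∧ ∀ ω : ℂ, ‖ω‖ < 1 →
      (1 - ‖ω‖ ^ 2) ^ ((1 + β) / 2) * ‖C.comp ((Ring.inverse (1 - ω • T)) ^ (m + 1))‖ ≤ K :=
  stmt4_general T c₀ hT C α β hβ m hm M hM hsum hadm
end

section
/- Let X, Y be complex Hilbert spaces, T : X → X power bounded with constant c₀, C : X → Y bounded, α > -1, and suppose ∑_{k=1}^∞ k^α ‖C T^{k-1} x‖² ≤ M² ‖x‖² for all x. Let m be a nonnegative integer. Then for every ω in the open unit disc and every x ∈ X, ‖C (I - ωT)^{-(m+1)} x‖ ≤ (1/m!) (∑_{k=1}^∞ k^α ‖C T^{k-1} x‖²)^{1/2} (∑_{k=1}^∞ c_k² |ω|^{2(k-1)})^{1/2}, where c_k = k(k+1)⋯(k+m-1)/k^{α/2}. -/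
/-!
Power boundedness gives `‖(ωT)ⁿ‖ ≤ c₀ |ω|ⁿ`, so the binomial series
`(I - ωT)^{-(m+1)} = ∑ₙ C(n+m, m) ωⁿ Tⁿ` converges absolutely in operator norm, exactly as
for a scalar of modulus less than one. Applying `C` and `x`, the `n`-th term has norm
`C(n+m, m) |ω|ⁿ ‖C Tⁿ x‖`, and since `m! C(n+m, m) = (n+1)(n+2)⋯(n+m)` this is
`(1/m!) · ((n+1)^{α/2} ‖C Tⁿ x‖) · (c_{n+1} |ω|ⁿ)`. Cauchy–Schwarz in `ℓ²` finishes the proof;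
the second factor is square summable because `c_{n+1}²` grows only polynomially.
-/

open Finset Nat

theorem Summable.hasSum_geom_series_inverse {R : Type*} [Ring R] [TopologicalSpace R]
    [IsTopologicalRing R] [T2Space R] {r : R} (h : Summable (r ^ ·)) :
    HasSum (r ^ ·) (Ring.inverse (1 - r)) := by
  let u : Rˣ := ⟨1 - r, ∑' n, r ^ n, h.one_sub_mul_tsum_pow, h.tsum_pow_mul_one_sub⟩
  have : Ring.inverse (1 - r) = ∑' n, r ^ n := Ring.inverse_unit u
  exact this ▸ h.hasSum

theorem hasSum_choose_mul_geometric_of_norm_pow_le {R : Type*} [NormedRing R] [CompleteSpace R]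
    {r : R} {c q : ℝ} (hq₀ : 0 ≤ q) (hq : q < 1) (hr : ∀ n, ‖r ^ n‖ ≤ c * q ^ n) (k : ℕ) :
    HasSum (fun n ↦ ((n + k).choose k : R) * r ^ n) (Ring.inverse (1 - r) ^ (k + 1)) := by
  have hq' : ‖q‖ < 1 := by rwa [Real.norm_of_nonneg hq₀]
  have hnorm : Summable fun n ↦ ‖r ^ n‖ :=
    .of_nonneg_of_le (fun _ ↦ norm_nonneg _) hr ((summable_geometric_of_lt_one hq₀ hq).mul_left c)
  have hgeom := hnorm.of_norm.hasSum_geom_series_inverse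
  induction k with
  | zero => simpa using hgeom
  | succ k ih =>
    have hchoose : Summable fun n ↦ ‖((n + k).choose k : R) * r ^ n‖ := by
      refine .of_nonneg_of_le (fun _ ↦ norm_nonneg _) (fun n ↦ ?_)
        ((summable_choose_mul_geometric_of_norm_lt_one k hq').mul_left (‖(1 : R)‖ * c))
      calc ‖((n + k).choose k : R) * r ^ n‖ ≤ ((n + k).choose k * ‖(1 : R)‖) * (c * q ^ n) :=
            (norm_mul_le _ _).trans (mul_le_mul (Nat.norm_cast_le _) (hr n) (norm_nonneg _)
              (by positivity))
        _ = ‖(1 : R)‖ * c * ((n + k).choose k * q ^ n) := by ring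
    convert hasSum_sum_range_mul_of_summable_norm' hchoose ih.summable hnorm hgeom.summable
      using 1 with n
    · funext n
      have : ∑ i ∈ range (n + 1), ((i + k).choose k : R) * r ^ i * r ^ (n - i) =
          ∑ i ∈ range (n + 1), ((i + k).choose k : R) * r ^ n := by
        refine sum_congr rfl fun i hi ↦ ?_
        rw [mul_assoc, ← pow_add, Nat.add_sub_cancel' (Nat.le_of_lt_succ (mem_range.1 hi))]
      simp [this, ← sum_mul, ← Nat.cast_sum, Nat.sum_range_add_choose n k, add_assoc]
    · rw [ih.tsum_eq, hgeom.tsum_eq, pow_succ]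

theorem hasSum_inverse_one_sub_smul_pow_apply {𝕜 E : Type*}
    [NontriviallyNormedField 𝕜] [NormedAddCommGroup E] [NormedSpace 𝕜 E] [CompleteSpace E]
    {T : E →L[𝕜] E} {c₀ : ℝ} (hT : ∀ n, ‖T ^ n‖ ≤ c₀) {ω : 𝕜} (hω : ‖ω‖ < 1) (m : ℕ) (x : E) :
    HasSum (fun n ↦ ((n + m).choose m * ω ^ n) • (T ^ n) x)
      ((Ring.inverse (1 - ω • T) ^ (m + 1)) x) := by
  have hbound (n : ℕ) : ‖(ω • T) ^ n‖ ≤ c₀ * ‖ω‖ ^ n := by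
    rw [smul_pow, norm_smul, norm_pow, mul_comm]
    exact mul_le_mul_of_nonneg_right (hT n) (by positivity)
  convert (ContinuousLinearMap.apply 𝕜 E x).hasSum
    (hasSum_choose_mul_geometric_of_norm_pow_le (norm_nonneg ω) hω hbound m) using 1
  · funext n
    simp [smul_pow, mul_smul, smul_comm (ω ^ n), Nat.cast_smul_eq_nsmul]
  · rfl

theorem Nat.ascFactorial_le_pow_mul_factorial (n m : ℕ) :
    (n + 1).ascFactorial m ≤ (n + 1) ^ m * m ! := by
  rw [ascFactorial_eq_prod_range, ← prod_range_add_one_eq_factorial, ← card_range m,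
    ← prod_const, card_range, ← prod_mul_distrib]
  exact prod_le_prod' fun i _ ↦ by nlinarith

theorem summable_add_one_rpow_mul_geometric_s10 (s : ℝ) {q : ℝ} (hq₀ : 0 ≤ q) (hq : q < 1) :
    Summable fun n : ℕ ↦ ((n : ℝ) + 1) ^ s * q ^ n := by
  set K := ⌈s⌉₊
  have hq' : ‖q‖ < 1 := by rwa [Real.norm_of_nonneg hq₀]
  refine .of_nonneg_of_le (fun n ↦ by positivity) (fun n ↦ ?_)
    ((summable_choose_mul_geometric_of_norm_lt_one K hq').mul_left (K ! : ℝ))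
  have hpow : ((n : ℝ) + 1) ^ s ≤ K ! * (n + K).choose K :=
    calc ((n : ℝ) + 1) ^ s ≤ ((n : ℝ) + 1) ^ (K : ℝ) :=
          Real.rpow_le_rpow_of_exponent_le (by linarith [n.cast_nonneg (α := ℝ)]) (Nat.le_ceil s)
      _ = ((n + 1) ^ K : ℕ) := by push_cast; exact Real.rpow_natCast _ _
      _ ≤ ((n + 1).ascFactorial K : ℕ) := by exact_mod_cast Nat.pow_succ_le_ascFactorial _ _
      _ = K ! * (n + K).choose K := by rw [Nat.ascFactorial_eq_factorial_mul_choose]; push_cast; rfl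
  calc ((n : ℝ) + 1) ^ s * q ^ n ≤ K ! * (n + K).choose K * q ^ n := by gcongr
    _ = K ! * ((n + K).choose K * q ^ n) := mul_assoc _ _ _

theorem summable_ascFactorial_sq_mul_rpow_mul_geometric (m : ℕ) (s : ℝ) {q : ℝ} (hq₀ : 0 ≤ q)
    (hq : q < 1) :
    Summable fun n : ℕ ↦ ((n + 1).ascFactorial m : ℝ) ^ 2 * ((n : ℝ) + 1) ^ s * q ^ n := by
  refine .of_nonneg_of_le (fun n ↦ by positivity) (fun n ↦ ?_)
    ((summable_add_one_rpow_mul_geometric_s10 ((2 * m : ℕ) + s) hq₀ hq).mul_left ((m ! : ℝ) ^ 2))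
  have hasc : ((n + 1).ascFactorial m : ℝ) ≤ ((n : ℝ) + 1) ^ m * m ! := by
    exact_mod_cast Nat.ascFactorial_le_pow_mul_factorial n m
  calc ((n + 1).ascFactorial m : ℝ) ^ 2 * ((n : ℝ) + 1) ^ s * q ^ n
      ≤ (((n : ℝ) + 1) ^ m * m !) ^ 2 * ((n : ℝ) + 1) ^ s * q ^ n := by gcongr
    _ = (m ! : ℝ) ^ 2 * (((n : ℝ) + 1) ^ ((2 * m : ℕ) + s) * q ^ n) := by
        rw [Real.rpow_add (by positivity), Real.rpow_natCast]
        ring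

theorem HasSum.norm_le_of_norm_le_sqrt_mul {ι E : Type*} [SeminormedAddCommGroup E]
    {t : ι → E} {s : E} {f g : ι → ℝ} {K : ℝ} (hs : HasSum t s) (hK : 0 ≤ K)
    (hf : ∀ i, 0 ≤ f i) (hg : ∀ i, 0 ≤ g i) (hf_sum : Summable f) (hg_sum : Summable g)
    (ht : ∀ i, ‖t i‖ ≤ K * √(f i * g i)) :
    ‖s‖ ≤ K * (∑' i, f i) ^ (1 / 2 : ℝ) * (∑' i, g i) ^ (1 / 2 : ℝ) := by
  have hsq {h : ι → ℝ} (hh : ∀ i, 0 ≤ h i) : (fun i ↦ √(h i) ^ (2 : ℝ)) = h := by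
    funext i; rw [Real.rpow_two, Real.sq_sqrt (hh i)]
  obtain ⟨hsum, hle⟩ := Real.summable_and_inner_le_Lp_mul_Lq_tsum_of_nonneg
    Real.HolderConjugate.two_two (fun i ↦ Real.sqrt_nonneg (f i)) (fun i ↦ Real.sqrt_nonneg (g i))
    (by rwa [hsq hf]) (by rwa [hsq hg])
  rw [hsq hf, hsq hg] at hle
  calc ‖s‖ ≤ ∑' i, K * (√(f i) * √(g i)) :=
        hs.norm_le_of_bounded (hsum.mul_left K).hasSum fun i ↦
          (ht i).trans_eq (by rw [Real.sqrt_mul (hf i)])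
    _ ≤ K * ((∑' i, f i) ^ (1 / 2 : ℝ) * (∑' i, g i) ^ (1 / 2 : ℝ)) := by
        rw [tsum_mul_left]; exact mul_le_mul_of_nonneg_left hle hK
    _ = _ := (mul_assoc _ _ _).symm

theorem stmt10_general {X Y : Type*}
    [NormedAddCommGroup X] [InnerProductSpace ℂ X] [CompleteSpace X]
    [NormedAddCommGroup Y] [InnerProductSpace ℂ Y]
    (T : X →L[ℂ] X) (c₀ : ℝ) (hT : ∀ k : ℕ, ‖T ^ k‖ ≤ c₀)
    (C : X →L[ℂ] Y) (α : ℝ)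
    (hsum : ∀ x : X, Summable (fun k : ℕ => ((k : ℝ) + 1) ^ α * ‖C (T ^ k <| x)‖ ^ 2))
    (m : ℕ)
    (c : ℕ → ℝ)
    (hc : ∀ k : ℕ, 1 ≤ k →
      c k = (∏ i ∈ Finset.range m, ((k : ℝ) + (i : ℝ))) / (k : ℝ) ^ (α / 2)) :
    ∀ ω : ℂ, ‖ω‖ < 1 → ∀ x : X,
      ‖C (((Ring.inverse (1 - ω • T)) ^ (m + 1)) x)‖ ≤
        (1 / (m.factorial : ℝ)) *
          (∑' k : ℕ, ((k : ℝ) + 1) ^ α * ‖C (T ^ k <| x)‖ ^ 2) ^ ((1 : ℝ) / 2) *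
          (∑' k : ℕ, (c (k + 1)) ^ 2 * ‖ω‖ ^ (2 * k)) ^ ((1 : ℝ) / 2) := by
  intro ω hω x
  have hc_sq (n : ℕ) :
      c (n + 1) ^ 2 = ((n + 1).ascFactorial m : ℝ) ^ 2 * ((n : ℝ) + 1) ^ (-α) := by
    have hpos : (0 : ℝ) < (n : ℝ) + 1 := by positivity
    have hexp : α / 2 * ((2 : ℕ) : ℝ) = α := by push_cast; ring
    rw [hc (n + 1) n.succ_pos, Nat.ascFactorial_eq_prod_range]
    push_cast
    rw [div_pow, ← Real.rpow_natCast (_ ^ (α / 2)) 2, ← Real.rpow_mul hpos.le, hexp,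
      Real.rpow_neg hpos.le, div_eq_mul_inv]
  refine HasSum.norm_le_of_norm_le_sqrt_mul
    (C.hasSum (hasSum_inverse_one_sub_smul_pow_apply hT hω m x))
    (by positivity) (fun n ↦ by positivity) (fun n ↦ by positivity) (hsum x) ?_ fun n ↦ ?_
  · refine (summable_ascFactorial_sq_mul_rpow_mul_geometric m (-α) (sq_nonneg ‖ω‖)
      (by nlinarith [norm_nonneg ω])).congr fun n ↦ ?_
    rw [hc_sq, pow_mul]
  · have hfg : ((n : ℝ) + 1) ^ α * ‖C ((T ^ n) x)‖ ^ 2 * (c (n + 1) ^ 2 * ‖ω‖ ^ (2 * n))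
        = ((m ! * (n + m).choose m : ℕ) * ‖ω‖ ^ n * ‖C ((T ^ n) x)‖ : ℝ) ^ 2 := by
      rw [hc_sq, Nat.ascFactorial_eq_factorial_mul_choose, Real.rpow_neg (by positivity)]
      field_simp
      ring
    rw [hfg, Real.sqrt_sq (by positivity), map_smul, norm_smul, norm_mul, norm_pow,
      Complex.norm_natCast]
    push_cast
    exact le_of_eq (by field_simp)

/-- Under the α-admissibility estimate, for every ω in the unit disc and x ∈ X,
‖C (I-ωT)^{-(m+1)} x‖ ≤ (1/m!) (∑ k^α ‖C T^{k-1} x‖²)^{1/2} (∑ c_k² |ω|^{2(k-1)})^{1/2}. -/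
theorem stmt10 {X Y : Type*}
    [NormedAddCommGroup X] [InnerProductSpace ℂ X] [CompleteSpace X]
    [NormedAddCommGroup Y] [InnerProductSpace ℂ Y] [CompleteSpace Y]
    (T : X →L[ℂ] X) (c₀ : ℝ) (hT : ∀ k : ℕ, ‖T ^ k‖ ≤ c₀)
    (C : X →L[ℂ] Y) (α : ℝ) (hα : α > -1) (M : ℝ)
    (hsum : ∀ x : X, Summable (fun k : ℕ => ((k : ℝ) + 1) ^ α * ‖C (T ^ k <| x)‖ ^ 2))
    (hadm : ∀ x : X, (∑' k : ℕ, ((k : ℝ) + 1) ^ α * ‖C (T ^ k <| x)‖ ^ 2) ≤ M ^ 2 * ‖x‖ ^ 2)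
    (m : ℕ)
    (c : ℕ → ℝ)
    (hc : ∀ k : ℕ, 1 ≤ k →
      c k = (∏ i ∈ Finset.range m, ((k : ℝ) + (i : ℝ))) / (k : ℝ) ^ (α / 2)) :
    ∀ ω : ℂ, ‖ω‖ < 1 → ∀ x : X,
      ‖C (((Ring.inverse (1 - ω • T)) ^ (m + 1)) x)‖ ≤
        (1 / (m.factorial : ℝ)) *
          (∑' k : ℕ, ((k : ℝ) + 1) ^ α * ‖C (T ^ k <| x)‖ ^ 2) ^ ((1 : ℝ) / 2) *
          (∑' k : ℕ, (c (k + 1)) ^ 2 * ‖ω‖ ^ (2 * k)) ^ ((1 : ℝ) / 2) :=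
  stmt10_general T c₀ hT C α hsum m c hc
end

section
/- Let X be a reflexive Banach space and T : X → X a power bounded operator. Then X decomposes as a (topological) direct sum X = Ker(I - T) ⊕ closure(Ran(I - T)). -/
/-!
The Cesàro means `Aₙ = n⁻¹ ∑_{k<n} Tᵏ` are bounded by `sup ‖Tᵏ‖` and satisfy
`(1 - T) Aₙ = Aₙ (1 - T) = n⁻¹ (1 - Tⁿ) → 0` in operator norm. Hence, by equicontinuity,
`Aₙ z → 0` on the closure of `range (1 - T)`, while `Aₙ` fixes `ker (1 - T)`: the two subspaces
meet only in `0`. For codisjointness, reflexivity and Banach–Alaoglu give a weak cluster point `y`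
of the bounded sequence `Aₙ x`. Testing against functionals, `(1 - T) y = 0` because
`(1 - T) Aₙ x → 0`, and `x - y` lies in the closed subspace `closure (range (1 - T))` because
every `x - Aₙ x` does (Hahn–Banach).
-/

open Filter Finset Function Topology

theorem MapClusterPt.eq_of_tendsto {α ι : Type*} [TopologicalSpace α] [T2Space α]
    {l : Filter ι} {u : ι → α} {x y : α} (hx : MapClusterPt x l u) (hu : Tendsto u l (𝓝 y)) :
    x = y :=
  eq_of_nhds_neBot (hx.clusterPt.mono hu)

theorem exists_forall_dual_mapClusterPt_of_norm_le
    {𝕜 X ι : Type*} [NontriviallyNormedField 𝕜] [ProperSpace 𝕜]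
    [NormedAddCommGroup X] [NormedSpace 𝕜 X]
    (hrefl : Surjective (NormedSpace.inclusionInDoubleDual 𝕜 X)) {l : Filter ι} [l.NeBot]
    {u : ι → X} {R : ℝ} (hu : ∀ i, ‖u i‖ ≤ R) :
    ∃ y : X, ∀ f : StrongDual 𝕜 X, MapClusterPt (f y) l (fun i => f (u i)) := by
  set v : ι → WeakDual 𝕜 (StrongDual 𝕜 X) :=
    fun i => StrongDual.toWeakDual (NormedSpace.inclusionInDoubleDual 𝕜 X (u i))
  have hv : ∀ i, v i ∈ WeakDual.toStrongDual ⁻¹' Metric.closedBall 0 R := fun i => by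
    simp only [Set.mem_preimage, Metric.mem_closedBall]
    exact (dist_zero_right (E := StrongDual 𝕜 (StrongDual 𝕜 X)) _).le.trans
      ((NormedSpace.double_dual_bound 𝕜 X (u i)).trans (hu i))
  obtain ⟨z, -, hz⟩ := (WeakDual.isCompact_closedBall 0 R).exists_mapClusterPt (f := l)
    (tendsto_principal.2 (Eventually.of_forall hv))
  obtain ⟨y, hy⟩ := hrefl (WeakDual.toStrongDual z)
  refine ⟨y, fun f => ?_⟩
  have hzy : z f = f y := by rw [← WeakDual.toStrongDual_apply, ← hy]; rfl
  exact hzy ▸ hz.continuousAt_comp (WeakDual.eval_continuous f).continuousAt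

theorem Submodule.mem_of_forall_dual_eq_zero {𝕜 X : Type*} [RCLike 𝕜] [NormedAddCommGroup X]
    [NormedSpace 𝕜 X] {P : Submodule 𝕜 X} (hP : IsClosed (P : Set X)) {z : X}
    (h : ∀ f : StrongDual 𝕜 X, (∀ p ∈ P, f p = 0) → f z = 0) : z ∈ P := by
  have : IsClosed (P : Set X) := hP
  rw [← Submodule.Quotient.mk_eq_zero]
  refine SeparatingDual.eq_zero_of_forall_dual_eq_zero fun g => h (g.comp P.mkQL) fun p hp => ?_
  simp [(Submodule.Quotient.mk_eq_zero P).2 hp]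

namespace ContinuousLinearMap

variable {𝕜 E : Type*} [RCLike 𝕜] [NormedAddCommGroup E] [NormedSpace 𝕜 E]

def cesaroMean (T : E →L[𝕜] E) (n : ℕ) : E →L[𝕜] E := (n : 𝕜)⁻¹ • ∑ k ∈ range n, T ^ k

variable {T : E →L[𝕜] E} {C : ℝ}

theorem norm_cesaroMean_le (hT : ∀ k, ‖T ^ k‖ ≤ C) (n : ℕ) : ‖cesaroMean T n‖ ≤ C := by
  rcases eq_or_ne n 0 with rfl | hn
  · simpa [cesaroMean] using (norm_nonneg _).trans (hT 0)
  calc ‖cesaroMean T n‖ ≤ (n : ℝ)⁻¹ * ∑ k ∈ range n, ‖T ^ k‖ := by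
        rw [cesaroMean, norm_smul, norm_inv, RCLike.norm_natCast]
        gcongr
        exact norm_sum_le _ _
    _ ≤ (n : ℝ)⁻¹ * (n * C) := by
        gcongr
        simpa using sum_le_card_nsmul (range n) _ _ fun k _ => hT k
    _ = C := by field_simp

theorem one_sub_mul_cesaroMean (T : E →L[𝕜] E) (n : ℕ) :
    (1 - T) * cesaroMean T n = (n : 𝕜)⁻¹ • (1 - T ^ n) := by
  rw [cesaroMean, mul_smul_comm, mul_neg_geom_sum]

theorem cesaroMean_mul_one_sub (T : E →L[𝕜] E) (n : ℕ) :
    cesaroMean T n * (1 - T) = (n : 𝕜)⁻¹ • (1 - T ^ n) := by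
  rw [cesaroMean, smul_mul_assoc, geom_sum_mul_neg]

theorem tendsto_inv_smul_one_sub_pow (hT : ∀ k, ‖T ^ k‖ ≤ C) :
    Tendsto (fun n : ℕ => (n : 𝕜)⁻¹ • (1 - T ^ n)) atTop (𝓝 0) := by
  have hbound : ∀ n : ℕ, ‖(n : 𝕜)⁻¹ • (1 - T ^ n)‖ ≤ (n : ℝ)⁻¹ * (2 * C) := fun n => by
    rw [norm_smul, norm_inv, RCLike.norm_natCast]
    gcongr
    calc ‖1 - T ^ n‖ ≤ ‖T ^ 0‖ + ‖T ^ n‖ := by rw [pow_zero]; exact norm_sub_le _ _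
      _ ≤ 2 * C := by linarith [hT 0, hT n]
  refine squeeze_zero_norm hbound ?_
  simpa using (tendsto_inv_atTop_zero.comp tendsto_natCast_atTop_atTop).mul_const (2 * C)

theorem tendsto_cesaroMean_apply_one_sub_apply (hT : ∀ k, ‖T ^ k‖ ≤ C) (x : E) :
    Tendsto (fun n => cesaroMean T n ((1 - T) x)) atTop (𝓝 0) := by
  have h := ((apply 𝕜 E x).continuous.tendsto 0).comp (tendsto_inv_smul_one_sub_pow hT)
  rw [map_zero] at h
  exact h.congr fun n => congr($(cesaroMean_mul_one_sub T n) x).symm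

theorem tendsto_one_sub_apply_cesaroMean_apply (hT : ∀ k, ‖T ^ k‖ ≤ C) (x : E) :
    Tendsto (fun n => (1 - T) (cesaroMean T n x)) atTop (𝓝 0) := by
  have h := ((apply 𝕜 E x).continuous.tendsto 0).comp (tendsto_inv_smul_one_sub_pow hT)
  rw [map_zero] at h
  exact h.congr fun n => congr($(one_sub_mul_cesaroMean T n) x).symm

theorem one_sub_cesaroMean {n : ℕ} (hn : n ≠ 0) :
    1 - cesaroMean T n = (1 - T) * ((n : 𝕜)⁻¹ • ∑ k ∈ range n, ∑ j ∈ range k, T ^ j) := by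
  rw [mul_smul_comm, mul_sum]
  simp_rw [mul_neg_geom_sum]
  rw [sum_sub_distrib, sum_const, card_range, smul_sub, cesaroMean, ← Nat.cast_smul_eq_nsmul 𝕜,
    smul_smul, inv_mul_cancel₀ (Nat.cast_ne_zero.2 hn), one_smul]

theorem sub_cesaroMean_apply_mem_range {n : ℕ} (hn : n ≠ 0) (x : E) :
    x - cesaroMean T n x ∈ (1 - T).range :=
  ⟨_, congr($(one_sub_cesaroMean (T := T) hn) x).symm⟩

theorem cesaroMean_apply_of_mem_ker {x : E} (hx : x ∈ (1 - T).ker) {n : ℕ} (hn : n ≠ 0) :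
    cesaroMean T n x = x := by
  have hfix : IsFixedPt T x := (sub_eq_zero.1 (by simpa using hx)).symm
  have hpow : ∀ k, (T ^ k) x = x := fun k => by
    rw [FunLike.coe_pow_eq_iterate]; exact hfix.iterate k
  simp [cesaroMean, hpow, ← Nat.cast_smul_eq_nsmul 𝕜, smul_smul, hn]

theorem tendsto_cesaroMean_apply_of_mem_closure_range (hT : ∀ k, ‖T ^ k‖ ≤ C) {z : E}
    (hz : z ∈ closure ((1 - T).range : Set E)) :
    Tendsto (fun n => cesaroMean T n z) atTop (𝓝 0) := by
  have hequi : Equicontinuous fun n => ⇑(cesaroMean T n) :=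
    ((NormedSpace.equicontinuous_TFAE (cesaroMean T)).out 5 1).1
      (⟨C, norm_cesaroMean_le hT⟩ : ∃ C, ∀ n, ‖cesaroMean T n‖ ≤ C)
  refine closure_minimal ?_ (hequi.isClosed_setOfPred_tendsto continuous_const) hz
  rintro _ ⟨w, rfl⟩
  exact tendsto_cesaroMean_apply_one_sub_apply hT w

theorem disjoint_ker_closure_range (hT : ∀ k, ‖T ^ k‖ ≤ C) :
    Disjoint (1 - T).ker (1 - T).range.topologicalClosure := by
  refine Submodule.disjoint_def.2 fun a ha ha' => tendsto_nhds_unique ?_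
    (tendsto_cesaroMean_apply_of_mem_closure_range hT ha')
  exact tendsto_const_nhds.congr' <|
    (eventually_ne_atTop 0).mono fun n hn => (cesaroMean_apply_of_mem_ker ha hn).symm

theorem codisjoint_ker_closure_range
    (hrefl : Surjective (NormedSpace.inclusionInDoubleDual 𝕜 E)) (hT : ∀ k, ‖T ^ k‖ ≤ C) :
    Codisjoint (1 - T).ker (1 - T).range.topologicalClosure := by
  refine codisjoint_iff.2 <| Submodule.eq_top_iff'.2 fun x => ?_
  obtain ⟨y, hy⟩ := exists_forall_dual_mapClusterPt_of_norm_le hrefl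
    (l := atTop) fun n => (cesaroMean T n).le_of_opNorm_le (norm_cesaroMean_le hT n) x
  have hy_ker : y ∈ (1 - T).ker := by
    refine LinearMap.mem_ker.2 <| SeparatingDual.eq_zero_of_forall_dual_eq_zero fun g =>
      (hy (g.comp (1 - T))).eq_of_tendsto ?_
    have h := (g.continuous.tendsto 0).comp (tendsto_one_sub_apply_cesaroMean_apply hT x)
    rwa [map_zero] at h
  have hxy : x - y ∈ (1 - T).range.topologicalClosure := by
    refine Submodule.mem_of_forall_dual_eq_zero (Submodule.isClosed_topologicalClosure _)
      fun f hf => ?_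
    have hfy : f y = f x := by
      refine (hy f).eq_of_tendsto (tendsto_const_nhds.congr' ?_)
      filter_upwards [eventually_ne_atTop 0] with n hn
      have := hf _ ((1 - T).range.le_topologicalClosure (sub_cesaroMean_apply_mem_range hn x))
      rwa [map_sub, sub_eq_zero] at this
    rw [map_sub, hfy, sub_self]
  simpa using Submodule.add_mem_sup hy_ker hxy

end ContinuousLinearMap

theorem stmt11_general {X : Type*} [NormedAddCommGroup X] [NormedSpace ℂ X]
    (hrefl : Function.Surjective (NormedSpace.inclusionInDoubleDual ℂ X))
    (T : X →L[ℂ] X) (c₀ : ℝ) (hT : ∀ k : ℕ, ‖T ^ k‖ ≤ c₀) :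
    IsCompl (LinearMap.ker (((1 : X →L[ℂ] X) - T : X →L[ℂ] X) : X →ₗ[ℂ] X))
      (LinearMap.range (((1 : X →L[ℂ] X) - T : X →L[ℂ] X) : X →ₗ[ℂ] X)).topologicalClosure :=
  ⟨ContinuousLinearMap.disjoint_ker_closure_range hT,
    ContinuousLinearMap.codisjoint_ker_closure_range hrefl hT⟩

/-- Mean Ergodic Theorem decomposition: if X is a reflexive complex Banach space and
T is power bounded, then X = Ker(I - T) ⊕ closure(Ran(I - T)) as a topological direct sum. -/
theorem stmt11 {X : Type*} [NormedAddCommGroup X] [NormedSpace ℂ X] [CompleteSpace X]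
    (hrefl : Function.Surjective (NormedSpace.inclusionInDoubleDual ℂ X))
    (T : X →L[ℂ] X) (c₀ : ℝ) (hT : ∀ k : ℕ, ‖T ^ k‖ ≤ c₀) :
    IsCompl (LinearMap.ker (((1 : X →L[ℂ] X) - T : X →L[ℂ] X) : X →ₗ[ℂ] X))
      (LinearMap.range (((1 : X →L[ℂ] X) - T : X →L[ℂ] X) : X →ₗ[ℂ] X)).topologicalClosure :=
  stmt11_general hrefl T c₀ hT
end

section
/- Let T be a bounded operator on a Hilbert space X satisfying the Ritt resolvent estimate ‖(λ - T)^{-1}‖ ≤ c₂/|λ - 1| for all |λ| > 1, and let B = I - T. Assume that there exist ν ∈ (π/2, π) and K₀ such that z + B is invertible with |z| ‖B (z + B)^{-2}‖ ≤ K₀ for all z ∈ Σ_ν = {ξ ≠ 0 : |Arg ξ| < ν}. Then there exists a constant K such that (1 - |ω|²) ‖(I - T)(I - ωT)^{-2}‖ ≤ K for all ω in the open unit disc. -/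
/-!
With `λ = ω⁻¹` and `z = λ - 1`, so that `λ - T = z + (I - T)`, the quantity to bound becomes
`(|1 + z|² - 1) ‖B (z + B)⁻²‖` with `|1 + z|² - 1 = 2 Re z + |z|²`. The Ritt estimate controls
`|z|² ‖B (z + B)⁻²‖`. Off the sector `Re z < 0`, so that term is all there is; on the sector the
remaining `2 Re z ≤ 2 |z|` is absorbed by the sector estimate.
-/

theorem Ring.inverse_smul {𝕜 A : Type*} [Field 𝕜] [Ring A] [Algebra 𝕜 A] {c : 𝕜} (hc : c ≠ 0)
    (a : A) : Ring.inverse (c • a) = c⁻¹ • Ring.inverse a := by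
  have hinv : Ring.inverse (algebraMap 𝕜 A c) = algebraMap 𝕜 A c⁻¹ := by
    simpa using Ring.inverse_unit (Units.map (algebraMap 𝕜 A : 𝕜 →* A) (Units.mk0 c hc))
  have hc' : IsUnit (algebraMap 𝕜 A c) := (isUnit_iff_ne_zero.2 hc).map _
  rw [Algebra.smul_def, Ring.inverse_mul (.inl hc'), hinv, ← Algebra.commutes, Algebra.smul_def]

theorem one_sub_norm_sq_mul_norm_mul_inverse_one_sub_smul_sq {𝕜 A : Type*} [NormedField 𝕜]
    [NormedRing A] [NormedAlgebra 𝕜 A] (b T : A) {ω : 𝕜} (hω : ω ≠ 0) :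
    (1 - ‖ω‖ ^ 2) * ‖b * Ring.inverse (1 - ω • T) ^ 2‖ =
      (‖ω⁻¹‖ ^ 2 - 1) * ‖b * Ring.inverse (ω⁻¹ • 1 - T) ^ 2‖ := by
  have hfactor : 1 - ω • T = ω • (ω⁻¹ • 1 - T) := by
    rw [smul_sub, smul_smul, mul_inv_cancel₀ hω, one_smul]
  rw [hfactor, Ring.inverse_smul hω, smul_pow, mul_smul_comm, norm_smul, norm_pow, norm_inv]
  have : ‖ω‖ ≠ 0 := norm_ne_zero_iff.2 hω
  field_simp

theorem sq_mul_norm_mul_sq_le_of_norm_le_div {A : Type*} [NormedRing A] (b r : A) {c ρ : ℝ}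
    (hρ : ρ ≠ 0) (hr : ‖r‖ ≤ c / ρ) : ρ ^ 2 * ‖b * r ^ 2‖ ≤ ‖b‖ * c ^ 2 :=
  calc ρ ^ 2 * ‖b * r ^ 2‖ ≤ ρ ^ 2 * (‖b‖ * (c / ρ) ^ 2) := by
        gcongr
        calc ‖b * r ^ 2‖ ≤ ‖b‖ * ‖r‖ ^ 2 :=
              (norm_mul_le _ _).trans (by gcongr; exact norm_pow_le' r two_pos)
          _ ≤ ‖b‖ * (c / ρ) ^ 2 := by gcongr
    _ = ‖b‖ * c ^ 2 := by field_simp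

theorem Complex.norm_one_add_sq (z : ℂ) : ‖1 + z‖ ^ 2 = 1 + 2 * z.re + ‖z‖ ^ 2 := by
  rw [Complex.sq_norm, Complex.sq_norm, Complex.normSq_add]
  simp only [map_one, one_mul, Complex.conj_re]
  ring

open Real in
theorem Complex.norm_one_add_sq_sub_one_mul_le {z : ℂ} {N M K ν : ℝ} (hν : π / 2 < ν)
    (hN : 0 ≤ N) (hM : ‖z‖ ^ 2 * N ≤ M) (hK : |Complex.arg z| < ν → ‖z‖ * N ≤ K) :
    (‖1 + z‖ ^ 2 - 1) * N ≤ M + 2 * |K| := by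
  rw [Complex.norm_one_add_sq]
  by_cases harg : |Complex.arg z| < ν
  · have hre : z.re ≤ ‖z‖ := Complex.re_le_norm z
    nlinarith [hK harg, le_abs_self K]
  · have hre : z.re ≤ 0 := by
      by_contra! h
      exact harg ((Complex.abs_arg_le_pi_div_two_iff.2 h.le).trans_lt hν)
    nlinarith [abs_nonneg K]

open Real in
theorem stmt13_general {X : Type*} [NormedAddCommGroup X] [InnerProductSpace ℂ X]
    (T : X →L[ℂ] X) (c₂ : ℝ)
    (hRitt : ∀ lam : ℂ, 1 < ‖lam‖ →
      IsUnit (lam • (1 : X →L[ℂ] X) - T) ∧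
        ‖Ring.inverse (lam • (1 : X →L[ℂ] X) - T)‖ ≤ c₂ / ‖lam - 1‖)
    (ν : ℝ) (hν1 : π / 2 < ν) (K₀ : ℝ)
    (hsec : ∀ z : ℂ, z ≠ 0 → |Complex.arg z| < ν →
      IsUnit (z • (1 : X →L[ℂ] X) + (1 - T)) ∧
        ‖z‖ * ‖(1 - T) * (Ring.inverse (z • (1 : X →L[ℂ] X) + (1 - T))) ^ 2‖ ≤ K₀) :
    ∃ K : ℝ, ∀ ω : ℂ, ‖ω‖ < 1 →
      (1 - ‖ω‖ ^ 2) * ‖(1 - T) * (Ring.inverse (1 - ω • T)) ^ 2‖ ≤ K := by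
  refine ⟨‖1 - T‖ + (‖1 - T‖ * c₂ ^ 2 + 2 * |K₀|), fun ω hω => ?_⟩
  rcases eq_or_ne ω 0 with rfl | hω0
  · simp only [norm_zero, ne_eq, OfNat.ofNat_ne_zero, not_false_eq_true, zero_pow, sub_zero,
      zero_smul, Ring.inverse_one, one_pow, mul_one, one_mul, le_add_iff_nonneg_right]
    positivity
  rw [one_sub_norm_sq_mul_norm_mul_inverse_one_sub_smul_sq _ _ hω0]
  set z := ω⁻¹ - 1
  have hlam : ω⁻¹ = 1 + z := by ring
  have hlam_norm : 1 < ‖ω⁻¹‖ := by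
    rw [norm_inv]
    exact one_lt_inv₀ (norm_pos_iff.2 hω0) |>.2 hω
  have hz : z ≠ 0 := fun h => by simp [hlam, h] at hlam_norm
  have hshift : z • (1 : X →L[ℂ] X) + (1 - T) = ω⁻¹ • 1 - T := by
    rw [hlam, add_smul, one_smul]
    abel
  rw [hlam] at hlam_norm ⊢
  refine le_add_of_nonneg_left (norm_nonneg _) |>.trans' <|
    Complex.norm_one_add_sq_sub_one_mul_le hν1 (norm_nonneg _) ?_ fun harg => ?_
  · exact sq_mul_norm_mul_sq_le_of_norm_le_div _ _ (norm_ne_zero_iff.2 hz)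
      (by simpa using (hRitt _ hlam_norm).2)
  · simpa [hshift, hlam] using (hsec z hz harg).2

open Real in
/-- Under the Ritt resolvent estimate and the sector estimate |z| ‖B (z+B)^{-2}‖ ≤ K₀
on Σ_ν (ν > π/2), there is K with (1-|ω|²) ‖(I-T)(I-ωT)^{-2}‖ ≤ K on the unit disc. -/
theorem stmt13 {X : Type*} [NormedAddCommGroup X] [InnerProductSpace ℂ X] [CompleteSpace X]
    (T : X →L[ℂ] X) (c₂ : ℝ) (hc₂ : 0 ≤ c₂)
    (hRitt : ∀ lam : ℂ, 1 < ‖lam‖ →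
      IsUnit (lam • (1 : X →L[ℂ] X) - T) ∧
        ‖Ring.inverse (lam • (1 : X →L[ℂ] X) - T)‖ ≤ c₂ / ‖lam - 1‖)
    (ν : ℝ) (hν1 : π / 2 < ν) (hν2 : ν < π) (K₀ : ℝ)
    (hsec : ∀ z : ℂ, z ≠ 0 → |Complex.arg z| < ν →
      IsUnit (z • (1 : X →L[ℂ] X) + (1 - T)) ∧
        ‖z‖ * ‖(1 - T) * (Ring.inverse (z • (1 : X →L[ℂ] X) + (1 - T))) ^ 2‖ ≤ K₀) :
    ∃ K : ℝ, ∀ ω : ℂ, ‖ω‖ < 1 →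
      (1 - ‖ω‖ ^ 2) * ‖(1 - T) * (Ring.inverse (1 - ω • T)) ^ 2‖ ≤ K :=
  stmt13_general T c₂ hRitt ν hν1 K₀ hsec
end

section
/- Let β ∈ (-1, 3), and let θ ∈ (0,1) satisfy θ < (1+β)/2 < 1 + θ. Let B be a bounded invertible operator on a Hilbert space X such that t + B is invertible for all t > 0 with sup_{t>0} t^{(1+β)/2} ‖C (t+B)^{-2}‖ ≤ K for a bounded operator C : X → Y (case m = 1). Assume moreover B is sectorial of type σ < π/2 with constant K_ν for each ν ∈ (σ, π). Then, with φ_θ(z) = z^θ/(1+z), the family {t^{(1+α)/2 - 1} C B^{-1} φ_θ(tB) : t > 0} is uniformly bounded in operator norm, where α = 2 - β. -/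
/-- In a monoid with zero, a left inverse of a unit is `Ring.inverse`. -/
lemma aux_ringInverse_eq {R : Type*} [MonoidWithZero R] {a b : R}
    (ha : IsUnit a) (h : b * a = 1) : Ring.inverse a = b := by
  rw [← one_mul (Ring.inverse a), ← h, mul_assoc, Ring.mul_inverse_cancel a ha, mul_one]

open Real in
/-- Lemma 3.2 (m = 1, B invertible): if t^((1+β)/2) ‖C (t+B)^{-2}‖ ≤ K for t > 0 and
B is sectorial of type σ < π/2 (with fractional powers Bpow r of B), then with
φ_θ(tB) = (tB)^θ (I + tB)^{-1} = t^θ Bpow θ (I + tB)^{-1}, the family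
t^((1+α)/2 - 1) C B^{-1} φ_θ(tB), α = 2 - β, is uniformly bounded. -/
theorem stmt18 {X Y : Type*}
    [NormedAddCommGroup X] [InnerProductSpace ℂ X] [CompleteSpace X]
    [NormedAddCommGroup Y] [InnerProductSpace ℂ Y] [CompleteSpace Y]
    (C : X →L[ℂ] Y) (β θ : ℝ)
    (hβ1 : -1 < β) (hβ2 : β < 3) (hθ0 : 0 < θ) (hθ1 : θ < 1)
    (hθa : θ < (1 + β) / 2) (hθb : (1 + β) / 2 < 1 + θ)
    (B : X →L[ℂ] X) (hBinv : IsUnit B)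
    (Bpow : ℝ → (X →L[ℂ] X)) (hB0 : Bpow 0 = 1) (hB1 : Bpow 1 = B)
    (hBadd : ∀ s t : ℝ, 0 ≤ s → 0 ≤ t → Bpow (s + t) = Bpow s * Bpow t)
    (σ : ℝ) (hσ0 : 0 < σ) (hσ : σ < π / 2)
    (hsec : ∀ ν : ℝ, σ < ν → ν < π → ∃ Kν : ℝ, ∀ ξ : ℂ, ξ ≠ 0 → ν ≤ |Complex.arg ξ| →
      IsUnit (ξ • (1 : X →L[ℂ] X) - B) ∧
        ‖ξ‖ * ‖Ring.inverse (ξ • (1 : X →L[ℂ] X) - B)‖ ≤ Kν)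
    (hres : ∀ t : ℝ, 0 < t → IsUnit ((t : ℂ) • (1 : X →L[ℂ] X) + B))
    (hres' : ∀ t : ℝ, 0 < t → IsUnit ((1 : X →L[ℂ] X) + (t : ℂ) • B))
    (K : ℝ)
    (hbound : ∀ t : ℝ, 0 < t →
      t ^ ((1 + β) / 2) *
        ‖C.comp ((Ring.inverse ((t : ℂ) • (1 : X →L[ℂ] X) + B)) ^ 2)‖ ≤ K) :
    ∃ K' : ℝ, ∀ t : ℝ, 0 < t →
      t ^ ((1 + (2 - β)) / 2 - 1) *
        ‖C.comp (Ring.inverse B *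
          (((t ^ θ : ℝ) : ℂ) • (Bpow θ * Ring.inverse ((1 : X →L[ℂ] X) + (t : ℂ) • B))))‖
        ≤ K' := by
  -- exponent bookkeeping
  set e : ℝ := (1 + (2 - β)) / 2 - 1 + θ with hedef
  have he0 : 0 < e := by rw [hedef]; linarith
  have he1 : e < 1 := by rw [hedef]; linarith
  -- sectoriality constant
  set ν : ℝ := (σ + π) / 2 with hνdef
  have hπ : (0:ℝ) < π := Real.pi_pos
  obtain ⟨Kν, hKν⟩ := hsec ν (by rw [hνdef]; linarith) (by rw [hνdef]; linarith)
  have hKν0 : 0 ≤ Kν := by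
    have harg : ν ≤ |Complex.arg (-1 : ℂ)| := by
      rw [Complex.arg_neg_one, abs_of_pos hπ]; rw [hνdef]; linarith
    have := (hKν (-1) (by norm_num) harg).2
    exact le_trans (mul_nonneg (norm_nonneg _) (norm_nonneg _)) this
  set nB : ℝ := ‖Ring.inverse B‖ with hnBdef
  have hnB0 : 0 ≤ nB := norm_nonneg _
  -- uniform bound on the resolvent-type factor
  have hunif : ∀ t : ℝ, 0 < t →
      ‖Ring.inverse ((1 : X →L[ℂ] X) + (t : ℂ) • B)‖ ≤ Kν := by
    intro t ht
    have htc : (t : ℂ) ≠ 0 := by exact_mod_cast ne_of_gt ht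
    set ξ : ℂ := ((-(t⁻¹) : ℝ) : ℂ) with hξdef
    have hξval : ξ = -(t : ℂ)⁻¹ := by rw [hξdef]; push_cast; ring
    have hξne : ξ ≠ 0 := by
      rw [hξval]; simpa using htc
    have hξarg : ν ≤ |Complex.arg ξ| := by
      rw [hξdef, Complex.arg_ofReal_of_neg (neg_neg_of_pos (inv_pos.mpr ht)),
        abs_of_pos hπ]
      rw [hνdef]; linarith
    obtain ⟨hu, hb⟩ := hKν ξ hξne hξarg
    have hct : (-(t:ℂ)) * ξ = 1 := by rw [hξval]; field_simp
    have hfac : (1 : X →L[ℂ] X) + (t : ℂ) • B = (-(t:ℂ)) • (ξ • (1 : X →L[ℂ] X) - B) := by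
      rw [smul_sub, smul_smul, hct, one_smul, neg_smul, sub_neg_eq_add]
    have hinv : Ring.inverse ((1 : X →L[ℂ] X) + (t : ℂ) • B)
        = (-(t:ℂ))⁻¹ • Ring.inverse (ξ • (1 : X →L[ℂ] X) - B) := by
      apply aux_ringInverse_eq (hres' t ht)
      rw [hfac, smul_mul_assoc, mul_smul_comm, smul_smul,
        inv_mul_cancel₀ (by simpa using htc), one_smul,
        Ring.inverse_mul_cancel _ hu]
    rw [hinv, norm_smul]
    have h1 : ‖(-(t:ℂ))⁻¹‖ = ‖ξ‖ := by
      simp [hξval]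
    rw [h1]
    exact hb
  -- decay bound for large t
  set T : ℝ := 2 * nB + 1 with hTdef
  have hT1 : (1:ℝ) ≤ T := by rw [hTdef]; linarith
  have hdecay : ∀ t : ℝ, T ≤ t →
      ‖Ring.inverse ((1 : X →L[ℂ] X) + (t : ℂ) • B)‖ ≤ 2 * nB / t := by
    intro t hTt
    have ht : 0 < t := lt_of_lt_of_le (by linarith) hTt
    have htc : (t : ℂ) ≠ 0 := by exact_mod_cast ne_of_gt ht
    set w : X →L[ℂ] X := (-(t : ℂ)⁻¹) • Ring.inverse B with hwdef
    have hwn : ‖w‖ = t⁻¹ * nB := by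
      rw [hwdef, norm_smul, norm_neg, norm_inv, Complex.norm_real, Real.norm_eq_abs, abs_of_pos ht]
    have hwhalf : ‖w‖ ≤ 1/2 := by
      rw [hwn]
      rw [inv_mul_le_iff₀ ht]
      linarith
    have hw1 : ‖w‖ < 1 := lt_of_le_of_lt hwhalf (by norm_num)
    have hfac : (1 : X →L[ℂ] X) + (t : ℂ) • B = (t : ℂ) • (B * (1 - w)) := by
      have h2 : B * w = (-(t : ℂ)⁻¹) • (1 : X →L[ℂ] X) := by
        rw [hwdef, mul_smul_comm, Ring.mul_inverse_cancel B hBinv]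
      rw [mul_sub, mul_one, h2, smul_sub, smul_smul,
        show (t:ℂ) * (-(t:ℂ)⁻¹) = -1 by field_simp, neg_smul, one_smul, sub_neg_eq_add,
        add_comm]
    have hWunit : IsUnit ((1 : X →L[ℂ] X) - w) := isUnit_one_sub_of_norm_lt_one hw1
    have hinv : Ring.inverse ((1 : X →L[ℂ] X) + (t : ℂ) • B)
        = (t:ℂ)⁻¹ • (Ring.inverse ((1 : X →L[ℂ] X) - w) * Ring.inverse B) := by
      apply aux_ringInverse_eq (hres' t ht)
      rw [hfac, smul_mul_assoc, mul_smul_comm, smul_smul, inv_mul_cancel₀ htc, one_smul,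
        mul_assoc, ← mul_assoc (Ring.inverse B), Ring.inverse_mul_cancel B hBinv, one_mul,
        Ring.inverse_mul_cancel _ hWunit]
    have hWn : ‖Ring.inverse ((1 : X →L[ℂ] X) - w)‖ ≤ 2 := by
      rw [← geom_series_eq_inverse w hw1]
      refine le_trans (tsum_geometric_le_of_norm_lt_one w hw1) ?_
      have h1 : ‖(1 : X →L[ℂ] X)‖ ≤ 1 := ContinuousLinearMap.norm_id_le
      have h2 : (1 - ‖w‖)⁻¹ ≤ 2 := by
        rw [inv_le_comm₀ (by linarith) (by norm_num)]
        linarith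
      linarith
    rw [hinv, norm_smul, norm_inv, Complex.norm_real, Real.norm_eq_abs, abs_of_pos ht]
    rw [div_eq_inv_mul]
    refine mul_le_mul_of_nonneg_left ?_ (by positivity)
    calc ‖Ring.inverse ((1 : X →L[ℂ] X) - w) * Ring.inverse B‖
        ≤ ‖Ring.inverse ((1 : X →L[ℂ] X) - w)‖ * nB := norm_mul_le _ _
      _ ≤ 2 * nB := mul_le_mul_of_nonneg_right hWn hnB0
  -- key scalar estimate
  have hkey : ∀ t : ℝ, 0 < t →
      t ^ e * ‖Ring.inverse ((1 : X →L[ℂ] X) + (t : ℂ) • B)‖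
        ≤ max (T ^ e * Kν) (2 * nB) := by
    intro t ht
    rcases le_total t T with hle | hge
    · refine le_trans ?_ (le_max_left _ _)
      have h1 : t ^ e ≤ T ^ e := Real.rpow_le_rpow (le_of_lt ht) hle (le_of_lt he0)
      exact mul_le_mul h1 (hunif t ht) (norm_nonneg _) (by positivity)
    · refine le_trans ?_ (le_max_right _ _)
      calc t ^ e * ‖Ring.inverse ((1 : X →L[ℂ] X) + (t : ℂ) • B)‖
          ≤ t ^ e * (2 * nB / t) :=
            mul_le_mul_of_nonneg_left (hdecay t hge) (by positivity)
        _ = 2 * nB * t ^ (e - 1) := by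
            rw [Real.rpow_sub ht, Real.rpow_one]; ring
        _ ≤ 2 * nB * 1 := by
            refine mul_le_mul_of_nonneg_left ?_ (by positivity)
            exact Real.rpow_le_one_of_one_le_of_nonpos (le_trans hT1 hge) (by linarith)
        _ = 2 * nB := mul_one _
  -- put everything together
  set M : ℝ := ‖C‖ * nB * ‖Bpow θ‖ with hMdef
  have hM0 : 0 ≤ M := by positivity
  refine ⟨M * max (T ^ e * Kν) (2 * nB), fun t ht => ?_⟩
  set R := Ring.inverse ((1 : X →L[ℂ] X) + (t : ℂ) • B) with hRdef
  have htθ : ‖((t ^ θ : ℝ) : ℂ)‖ = t ^ θ := by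
    rw [Complex.norm_real, Real.norm_eq_abs, abs_of_pos (Real.rpow_pos_of_pos ht θ)]
  have hn1 : ‖C.comp (Ring.inverse B * (((t ^ θ : ℝ) : ℂ) • (Bpow θ * R)))‖
      ≤ ‖C‖ * (nB * (t ^ θ * (‖Bpow θ‖ * ‖R‖))) := by
    refine le_trans (ContinuousLinearMap.opNorm_comp_le _ _) ?_
    refine mul_le_mul_of_nonneg_left ?_ (norm_nonneg C)
    refine le_trans (norm_mul_le _ _) ?_
    refine mul_le_mul_of_nonneg_left ?_ hnB0
    rw [norm_smul, htθ]
    exact mul_le_mul_of_nonneg_left (norm_mul_le _ _) (le_of_lt (Real.rpow_pos_of_pos ht θ))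
  calc t ^ ((1 + (2 - β)) / 2 - 1) *
        ‖C.comp (Ring.inverse B * (((t ^ θ : ℝ) : ℂ) • (Bpow θ * R)))‖
      ≤ t ^ ((1 + (2 - β)) / 2 - 1) * (‖C‖ * (nB * (t ^ θ * (‖Bpow θ‖ * ‖R‖)))) := by
        refine mul_le_mul_of_nonneg_left hn1 ?_
        positivity
    _ = M * (t ^ e * ‖R‖) := by
        rw [hMdef, hedef, Real.rpow_add ht]; ring
    _ ≤ M * max (T ^ e * Kν) (2 * nB) :=
        mul_le_mul_of_nonneg_left (hkey t ht) hM0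
end
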